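/- The character of the permutation representation of S_m on the set Γ_ℓ^m of ℓ-cycles of [1,m] is given by a polynomial in X₁,...,X_ℓ that is independent of m: χ(g) = φ(ℓ)X_ℓ(g) + ∑_{ed=ℓ, e≠1} φ(d)(dᵉ/ℓ)·X_d(g)(X_d(g)−1)⋯(X_d(g)−e+1). -/

import Mathlib

/-!
A fixed `ℓ`-cycle has exactly `ℓ` representatives `t` (its rotations), and each satisfies
`g ∘ t = t ∘ (· + k)` for a unique `k ∈ ℤ/ℓ`, so `ℓ χ(g)` counts such pairs `(t, k)`.
If `k` has additive order `d`, such a `t` is determined by its values on representatives of the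
`ℓ / d` cosets of `⟨k⟩`, and these values can be any points of `g`-period `d` lying in pairwise
distinct `g`-orbits: an ordered choice of `ℓ / d` of the `X_d(g)` cycles of length `d`, and of one
of the `d` points on each. Exactly `φ(d)` elements of `ℤ/ℓ` have order `d`.
-/

/-- `cyc g i` is the number of `i`-cycles in the disjoint cycle decomposition of `g`
(fixed points count as `1`-cycles). -/
def cyc {m : ℕ} (g : Equiv.Perm (Fin m)) (i : ℕ) : ℕ :=
  if i = 1 then (Finset.univ.filter fun x => g x = x).card
  else Multiset.count i g.cycleType

/-- Injective `ℓ`-tuples of elements of `Fin m`. -/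
def Tup (ℓ m : ℕ) : Type := {f : Fin ℓ → Fin m // Function.Injective f}

/-- Two injective tuples are related iff one is a cyclic rotation of the other. -/
def cycRel (ℓ m : ℕ) [NeZero ℓ] (a b : Tup ℓ m) : Prop :=
  ∃ k : Fin ℓ, ∀ i, b.1 i = a.1 (i + k)

/-- The set `Γ_ℓ^m` of `ℓ`-cycles of `[1, m]`: injective `ℓ`-tuples of elements
of `{1, …, m}` modulo cyclic rotation. -/
def Cyc (ℓ m : ℕ) [NeZero ℓ] : Type := Quot (cycRel ℓ m)

/-- The coordinatewise action of `S_m` on the set of `ℓ`-cycles of `[1, m]`. -/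
def act {ℓ m : ℕ} [NeZero ℓ] (g : Equiv.Perm (Fin m)) : Cyc ℓ m → Cyc ℓ m :=
  Quot.map (fun f => ⟨g ∘ f.1, (Equiv.injective g).comp f.2⟩)
    (by rintro a b ⟨k, hk⟩; exact ⟨k, fun i => congrArg g (hk i)⟩)

open Function MulAction Subgroup AddSubgroup Finset

theorem Nat.card_eq_card_mul_of_card_fiber {α β : Type*} [Finite α] [Finite β] (f : α → β)
    {n : ℕ} (hf : ∀ b, Nat.card {a // f a = b} = n) : Nat.card α = Nat.card β * n := by
  have := Fintype.ofFinite β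
  rw [← Nat.card_congr (Equiv.sigmaFiberEquiv f), Nat.card_sigma, sum_congr rfl fun b _ => hf b,
    sum_const, Finset.card_univ, smul_eq_mul, Nat.card_eq_fintype_card]

instance Fin.isAddCyclic (n : ℕ) [NeZero n] : IsAddCyclic (Fin n) :=
  isAddCyclic_of_surjective (ZMod.finEquiv n).symm (ZMod.finEquiv n).symm.surjective

theorem IsAddCyclic.sum_comp_addOrderOf {G M : Type*} [AddGroup G] [Fintype G] [IsAddCyclic G]
    [AddCommMonoid M] (F : ℕ → M) :
    ∑ k : G, F (addOrderOf k) = ∑ d ∈ (Fintype.card G).divisors, d.totient • F d := by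
  classical
  rw [← sum_fiberwise_of_maps_to (g := addOrderOf) (t := (Fintype.card G).divisors)
    fun k _ => Nat.mem_divisors.2 ⟨addOrderOf_dvd_card, Fintype.card_ne_zero⟩]
  refine sum_congr rfl fun d hd => ?_
  rw [sum_congr rfl fun k hk => by rw [(mem_filter.1 hk).2], sum_const,
    IsAddCyclic.card_addOrderOf_eq_totient (Nat.dvd_of_mem_divisors hd)]

section Cosets

variable {G : Type*} [AddGroup G]

theorem AddSubgroup.natCard_quotient_zmultiples [Finite G] (k : G) :
    Nat.card (G ⧸ zmultiples k) = Nat.card G / addOrderOf k := by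
  rw [← (zmultiples k).index_mul_card, Nat.card_zmultiples,
    Nat.mul_div_cancel _ (addOrderOf_pos k), AddSubgroup.index]

theorem QuotientAddGroup.mk_add_zsmul (k i : G) (j : ℤ) :
    ((i + j • k : G) : G ⧸ zmultiples k) = i :=
  QuotientAddGroup.mk_add_of_mem i (zsmul_mem_zmultiples k j)

theorem QuotientAddGroup.exists_out_add_zsmul_eq (k i : G) :
    ∃ j : ℤ, (i : G ⧸ zmultiples k).out + j • k = i := by
  obtain ⟨j, hj⟩ := mem_zmultiples_iff.1 <|
    QuotientAddGroup.eq.1 (QuotientAddGroup.out_eq' (i : G ⧸ zmultiples k))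
  exact ⟨j, by rw [hj, add_neg_cancel_left]⟩

theorem QuotientAddGroup.exists_eq_out_add_zsmul (k i : G) :
    ∃ (c : G ⧸ zmultiples k) (j : ℤ), c.out + j • k = i :=
  ⟨_, exists_out_add_zsmul_eq k i⟩

end Cosets

namespace Equiv.Perm

variable {α : Type*} (g : Perm α)

theorem mem_orbit_zpowers_iff {x y : α} : y ∈ orbit (zpowers g) x ↔ g.SameCycle x y :=
  ⟨fun ⟨⟨_, j, rfl⟩, hy⟩ => ⟨j, hy⟩, fun ⟨j, hj⟩ => ⟨⟨g ^ j, j, rfl⟩, hj⟩⟩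

theorem mk_orbitRel_zpowers_eq_iff {x y : α} :
    (Quotient.mk'' x : orbitRel.Quotient (zpowers g) α) = Quotient.mk'' y ↔ g.SameCycle x y :=
  Quotient.eq''.trans (orbitRel_apply.trans (g.mem_orbit_zpowers_iff.trans sameCycle_comm))

theorem minimalPeriod_eq_natCard_orbit [Finite α] (x : α) :
    minimalPeriod g x = Nat.card (orbit (zpowers g) x) := by
  have := Fintype.ofFinite (orbit (zpowers g) x)
  rw [Nat.card_eq_fintype_card]
  exact minimalPeriod_eq_card (a := g) (b := x)

theorem zpow_apply_eq_zpow_apply_iff {G : Type*} [AddGroup G] {k : G} {x : α}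
    (hx : minimalPeriod g x = addOrderOf k) {j j' : ℤ} :
    (g ^ j) x = (g ^ j') x ↔ j • k = j' • k := by
  rw [← Perm.inv_eq_iff_eq (f := g ^ j'), ← zpow_neg, ← mul_apply, ← zpow_add]
  refine (zpow_smul_eq_iff_minimalPeriod_dvd (a := g) (b := x)).trans ?_
  change ((minimalPeriod g x : ℕ) : ℤ) ∣ _ ↔ _
  rw [hx, addOrderOf_dvd_iff_zsmul_eq_zero, add_zsmul, neg_zsmul, neg_add_eq_zero, eq_comm]

abbrev OrbitOfCard (d : ℕ) : Type _ :=
  {ω : orbitRel.Quotient (zpowers g) α // Nat.card ω.orbit = d}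

theorem natCard_orbitOfCard_mul [Finite α] (d : ℕ) :
    Nat.card (g.OrbitOfCard d) * d = Nat.card {x // minimalPeriod g x = d} := by
  refine (Nat.card_eq_card_mul_of_card_fiber (fun x => (⟨Quotient.mk'' x.1, by
    rw [orbitRel.Quotient.orbit_mk, ← minimalPeriod_eq_natCard_orbit, x.2]⟩ : g.OrbitOfCard d))
    ?_).symm
  rintro ⟨ω, rfl⟩
  refine Nat.card_congr
    ⟨fun x => ⟨x.1.1, orbitRel.Quotient.mem_orbit.2 (congrArg Subtype.val x.2)⟩,
      fun y => ⟨⟨y, ?_⟩, Subtype.ext (orbitRel.Quotient.mem_orbit.1 y.2)⟩,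
      fun _ => rfl, fun _ => rfl⟩
  rw [minimalPeriod_eq_natCard_orbit, ← orbitRel.Quotient.orbit_mk,
    orbitRel.Quotient.mem_orbit.1 y.2]

theorem card_support_cycleOf_eq_minimalPeriod [Fintype α] [DecidableEq α] {x : α}
    (hx : x ∈ g.support) : #(g.cycleOf x).support = minimalPeriod g x := by
  have : orbit (zpowers g) x = (g.cycleOf x).support := by
    ext y
    rw [mem_orbit_zpowers_iff, mem_coe, mem_support_cycleOf_iff, and_iff_left hx]
  rw [minimalPeriod_eq_natCard_orbit, this, Nat.card_coe_set_eq, Set.ncard_coe_finset]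

theorem count_cycleType [DecidableEq α] [Fintype α] (d : ℕ) :
    g.cycleType.count d = #{c ∈ g.cycleFactorsFinset | #c.support = d} := by
  rw [cycleType_def, Multiset.count_map, card, filter_val]
  exact congrArg Multiset.card (Multiset.filter_congr fun c _ => eq_comm)

theorem card_filter_minimalPeriod_eq [Fintype α] [DecidableEq α] {d : ℕ} (hd : d ≠ 1) :
    #{x | minimalPeriod g x = d} = d * g.cycleType.count d := by
  have hsupp {x : α} (hx : minimalPeriod g x = d) : x ∈ g.support :=
    mem_support.2 fun hfix => hd (hx ▸ minimalPeriod_eq_one_iff_isFixedPt.2 hfix)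
  rw [count_cycleType, card_eq_sum_card_fiberwise (f := g.cycleOf), sum_const_nat, mul_comm]
  · intro c hc
    obtain ⟨hc, hcard⟩ := mem_filter.1 hc
    refine (congrArg card (Finset.ext fun x => ?_)).trans hcard
    simp only [mem_filter, mem_univ, true_and]
    constructor
    · rintro ⟨hx, rfl⟩
      exact mem_support_cycleOf_iff.2 ⟨SameCycle.refl g x, hsupp hx⟩
    · intro hx
      have hcx := cycle_is_cycleOf hx hc
      refine ⟨?_, hcx.symm⟩
      rw [← card_support_cycleOf_eq_minimalPeriod g (mem_cycleFactorsFinset_support_le hc hx),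
        ← hcx, hcard]
  · intro x hx
    have hx := (mem_filter.1 hx).2
    exact mem_filter.2 ⟨cycleOf_mem_cycleFactorsFinset_iff.2 (hsupp hx),
      (card_support_cycleOf_eq_minimalPeriod g (hsupp hx)).trans hx⟩

end Equiv.Perm

theorem natCard_minimalPeriod_eq_mul_cyc {m : ℕ} (g : Equiv.Perm (Fin m)) (d : ℕ) :
    Nat.card {x // minimalPeriod g x = d} = d * cyc g d := by
  rw [Nat.card_eq_fintype_card, Fintype.card_subtype]
  rcases eq_or_ne d 1 with rfl | hd
  · simp only [cyc, if_pos, one_mul, minimalPeriod_eq_one_iff_isFixedPt, IsFixedPt]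
  · rw [cyc, if_neg hd, g.card_filter_minimalPeriod_eq hd]

theorem natCard_orbitOfCard_eq_cyc {m : ℕ} (g : Equiv.Perm (Fin m)) {d : ℕ} (hd : 0 < d) :
    Nat.card (g.OrbitOfCard d) = cyc g d := by
  have h := g.natCard_orbitOfCard_mul d
  rw [natCard_minimalPeriod_eq_mul_cyc, mul_comm] at h
  exact Nat.eq_of_mul_eq_mul_left hd h

section Intertwining

variable {G α : Type*} [AddGroup G]

abbrev IntertwiningEmb (g : Equiv.Perm α) (k : G) : Type _ :=
  {f : G → α // Injective f ∧ ∀ i, g (f i) = f (i + k)}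

abbrev OrbitChoice (g : Equiv.Perm α) (k : G) : Type _ :=
  {h : G ⧸ zmultiples k → α //
    (∀ c, minimalPeriod g (h c) = addOrderOf k) ∧ ∀ c c', g.SameCycle (h c) (h c') → c = c'}

variable {g : Equiv.Perm α} {k : G}

namespace IntertwiningEmb

variable (f : IntertwiningEmb g k)

theorem apply_add_zsmul (i : G) (j : ℤ) : f.1 (i + j • k) = (g ^ j) (f.1 i) := by
  have step (j : ℤ) :
      f.1 (i + (j + 1) • k) = (g ^ (j + 1)) (f.1 i) ↔ f.1 (i + j • k) = (g ^ j) (f.1 i) := by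
    rw [add_zsmul, one_zsmul, ← add_assoc, ← f.2.2, add_comm j, zpow_add, zpow_one,
      Equiv.Perm.mul_apply, g.injective.eq_iff]
  induction j using Int.induction_on with
  | zero => simp
  | succ j ih => exact (step j).2 ih
  | pred j ih => exact (step (-j - 1)).1 (by rwa [sub_add_cancel])

theorem minimalPeriod_apply (i : G) : minimalPeriod g (f.1 i) = addOrderOf k := by
  have key (n : ℕ) : IsPeriodicPt g n (f.1 i) ↔ n • k = 0 := by
    rw [IsPeriodicPt, IsFixedPt, Equiv.Perm.iterate_eq_pow, ← zpow_natCast, ← f.apply_add_zsmul,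
      f.2.1.eq_iff, add_eq_left, natCast_zsmul]
  exact Nat.dvd_antisymm ((key _).2 (addOrderOf_nsmul_eq_zero k)).minimalPeriod_dvd
    (addOrderOf_dvd_of_nsmul_eq_zero ((key _).1 (isPeriodicPt_minimalPeriod g (f.1 i))))

noncomputable def restrict : OrbitChoice g k :=
  ⟨fun c => f.1 c.out, fun c => f.minimalPeriod_apply c.out, fun c c' ⟨j, hj⟩ => by
    rw [← f.apply_add_zsmul, f.2.1.eq_iff] at hj
    rw [← QuotientAddGroup.out_eq' c, ← QuotientAddGroup.out_eq' c', ← hj,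
      QuotientAddGroup.mk_add_zsmul]⟩

end IntertwiningEmb

namespace OrbitChoice

variable (h : OrbitChoice g k)

noncomputable def extend (i : G) : α :=
  (g ^ (QuotientAddGroup.exists_out_add_zsmul_eq k i).choose) (h.1 i)

theorem extend_out_add_zsmul (c : G ⧸ zmultiples k) (j : ℤ) :
    h.extend (c.out + j • k) = (g ^ j) (h.1 c) := by
  have hc : ((c.out + j • k : G) : G ⧸ zmultiples k) = c := by
    rw [QuotientAddGroup.mk_add_zsmul, QuotientAddGroup.out_eq']
  have hspec := (QuotientAddGroup.exists_out_add_zsmul_eq k (c.out + j • k)).choose_spec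
  rw [extend]
  generalize (QuotientAddGroup.exists_out_add_zsmul_eq k (c.out + j • k)).choose = j' at hspec ⊢
  rw [hc, add_right_inj] at hspec
  rw [hc]
  exact (g.zpow_apply_eq_zpow_apply_iff (h.2.1 c)).2 hspec

theorem extend_add (i : G) : g (h.extend i) = h.extend (i + k) := by
  obtain ⟨c, j, rfl⟩ := QuotientAddGroup.exists_eq_out_add_zsmul k i
  have hj : c.out + j • k + k = c.out + (j + 1) • k := by rw [add_zsmul, one_zsmul, add_assoc]
  rw [hj, h.extend_out_add_zsmul, h.extend_out_add_zsmul, add_comm, zpow_add, zpow_one,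
    Equiv.Perm.mul_apply]

theorem extend_injective : Injective h.extend := by
  intro i i' hii
  obtain ⟨c, j, rfl⟩ := QuotientAddGroup.exists_eq_out_add_zsmul k i
  obtain ⟨c', j', rfl⟩ := QuotientAddGroup.exists_eq_out_add_zsmul k i'
  rw [h.extend_out_add_zsmul, h.extend_out_add_zsmul] at hii
  have hsame : g.SameCycle ((g ^ j) (h.1 c)) ((g ^ j') (h.1 c')) :=
    hii ▸ Equiv.Perm.SameCycle.refl g _
  obtain rfl : c = c' := h.2.2 c c' <| Equiv.Perm.sameCycle_zpow_left.1 <|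
    Equiv.Perm.sameCycle_zpow_right.1 hsame
  rw [(g.zpow_apply_eq_zpow_apply_iff (h.2.1 c)).1 hii]

end OrbitChoice

theorem IntertwiningEmb.restrict_bijective :
    Bijective (restrict : IntertwiningEmb g k → OrbitChoice g k) := by
  refine ⟨fun f f' hff' => Subtype.ext (funext fun i => ?_),
    fun h => ⟨⟨h.extend, h.extend_injective, h.extend_add⟩, ?_⟩⟩
  · obtain ⟨c, j, rfl⟩ := QuotientAddGroup.exists_eq_out_add_zsmul k i
    rw [f.apply_add_zsmul, f'.apply_add_zsmul]
    exact congrArg (g ^ j) (congrFun (congrArg Subtype.val hff') c)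
  · refine Subtype.ext (funext fun c => ?_)
    have := h.extend_out_add_zsmul c 0
    rwa [zero_zsmul, add_zero, zpow_zero, Equiv.Perm.one_apply] at this

variable [Finite α]

namespace OrbitChoice

def orbits (h : OrbitChoice g k) : G ⧸ zmultiples k ↪ g.OrbitOfCard (addOrderOf k) :=
  ⟨fun c => ⟨Quotient.mk'' (h.1 c), by
      rw [orbitRel.Quotient.orbit_mk, ← g.minimalPeriod_eq_natCard_orbit, h.2.1 c]⟩,
    fun c c' hcc' => h.2.2 c c' ((g.mk_orbitRel_zpowers_eq_iff).1 (congrArg Subtype.val hcc'))⟩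

def fiberOrbitsEquiv (q : G ⧸ zmultiples k ↪ g.OrbitOfCard (addOrderOf k)) :
    {h : OrbitChoice g k // h.orbits = q} ≃ ∀ c, (q c).1.orbit where
  toFun h c :=
    ⟨h.1.1 c, orbitRel.Quotient.mem_orbit.2 (congrArg Subtype.val (DFunLike.congr_fun h.2 c))⟩
  invFun y :=
    ⟨⟨fun c => y c,
      fun c => by
        rw [g.minimalPeriod_eq_natCard_orbit, ← orbitRel.Quotient.orbit_mk,
          orbitRel.Quotient.mem_orbit.1 (y c).2, (q c).2],
      fun c c' hcc' => q.injective <| Subtype.ext <|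
        (orbitRel.Quotient.mem_orbit.1 (y c).2).symm.trans
          ((g.mk_orbitRel_zpowers_eq_iff.2 hcc').trans (orbitRel.Quotient.mem_orbit.1 (y c').2))⟩,
    DFunLike.ext _ _ fun c => Subtype.ext (orbitRel.Quotient.mem_orbit.1 (y c).2)⟩
  left_inv _ := rfl
  right_inv _ := rfl

theorem natCard [Finite G] :
    Nat.card (OrbitChoice g k) =
      (Nat.card (g.OrbitOfCard (addOrderOf k))).descFactorial (Nat.card (G ⧸ zmultiples k)) *
        addOrderOf k ^ Nat.card (G ⧸ zmultiples k) := by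
  have := Fintype.ofFinite (G ⧸ zmultiples k)
  have := Fintype.ofFinite (g.OrbitOfCard (addOrderOf k))
  rw [Nat.card_eq_card_mul_of_card_fiber orbits fun q => ?_, Nat.card_eq_fintype_card,
    Fintype.card_embedding_eq, Nat.card_eq_fintype_card, Nat.card_eq_fintype_card]
  rw [Nat.card_congr (fiberOrbitsEquiv q), Nat.card_pi, prod_congr rfl fun c _ => (q c).2,
    prod_const, Finset.card_univ]

end OrbitChoice

theorem IntertwiningEmb.natCard [Finite G] :
    Nat.card (IntertwiningEmb g k) =
      (Nat.card (g.OrbitOfCard (addOrderOf k))).descFactorial (Nat.card G / addOrderOf k) *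
        addOrderOf k ^ (Nat.card G / addOrderOf k) := by
  rw [Nat.card_eq_of_bijective _ restrict_bijective, OrbitChoice.natCard,
    natCard_quotient_zmultiples]

end Intertwining
section Cycles

variable {ℓ m : ℕ} [NeZero ℓ]

instance : Finite (Tup ℓ m) := inferInstanceAs (Finite {f : Fin ℓ → Fin m // Injective f})

instance : Finite (Cyc ℓ m) := Quot.finite _

theorem cycRel_equivalence : Equivalence (cycRel ℓ m) where
  refl _ := ⟨0, fun i => by rw [add_zero]⟩
  symm := fun ⟨k, hk⟩ => ⟨-k, fun i => by rw [hk, neg_add_cancel_right]⟩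
  trans := fun ⟨k, hk⟩ ⟨k', hk'⟩ => ⟨k' + k, fun i => by rw [hk', hk, add_assoc]⟩

def Tup.rotate (t : Tup ℓ m) (s : Fin ℓ) : Tup ℓ m :=
  ⟨fun i => t.1 (i + s), t.2.comp (add_left_injective s)⟩

theorem natCard_fiber_mk (t₀ : Tup ℓ m) :
    Nat.card {t // Quot.mk (cycRel ℓ m) t = Quot.mk _ t₀} = ℓ := by
  refine (Nat.card_eq_of_bijective (fun s => ⟨t₀.rotate s, (Quot.sound ⟨s, fun _ => rfl⟩).symm⟩)
    ⟨fun s s' hss' => ?_, fun ⟨t, ht⟩ => ?_⟩).symm.trans (Nat.card_fin ℓ)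
  · have h0 := congrArg (fun t => t.1.1 0) hss'
    simpa using t₀.2 h0
  · obtain ⟨s, hs⟩ := cycRel_equivalence.symm ((cycRel_equivalence.quot_mk_eq_iff t t₀).1 ht)
    exact ⟨s, Subtype.ext (Subtype.ext (funext fun i => (hs i).symm))⟩

theorem natCard_subtype_mk (P : Cyc ℓ m → Prop) :
    Nat.card {t : Tup ℓ m // P (Quot.mk _ t)} = Nat.card {x // P x} * ℓ := by
  refine Nat.card_eq_card_mul_of_card_fiber (fun t => ⟨Quot.mk _ t.1, t.2⟩) fun ⟨x, hx⟩ => ?_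
  obtain ⟨t₀, rfl⟩ := Quot.exists_rep x
  exact (Nat.card_congr ((Equiv.subtypeEquivRight fun t => Subtype.ext_iff).trans
    (Equiv.subtypeSubtypeEquivSubtype (q := fun t => Quot.mk _ t = Quot.mk _ t₀)
      fun ht => ht ▸ hx))).trans (natCard_fiber_mk t₀)

theorem act_mk_eq_self_iff {g : Equiv.Perm (Fin m)} {t : Tup ℓ m} :
    act g (Quot.mk _ t) = Quot.mk _ t ↔ ∃ k, ∀ i, g (t.1 i) = t.1 (i + k) :=
  (cycRel_equivalence.quot_mk_eq_iff _ _).trans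
    ⟨fun h => cycRel_equivalence.symm h, fun h => cycRel_equivalence.symm h⟩

theorem natCard_fixedPoints_act_mul (g : Equiv.Perm (Fin m)) :
    Nat.card {x : Cyc ℓ m // act g x = x} * ℓ = ∑ k : Fin ℓ, Nat.card (IntertwiningEmb g k) := by
  rw [← natCard_subtype_mk, ← Nat.card_sigma]
  refine (Nat.card_eq_of_bijective
    (fun p => ⟨⟨p.2.1, p.2.2.1⟩, act_mk_eq_self_iff.2 ⟨p.1, p.2.2.2⟩⟩) ⟨?_, ?_⟩).symm
  · rintro ⟨k, f⟩ ⟨k', f'⟩ h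
    have hf : f.1 = f'.1 := congrArg (fun t => t.1.1) h
    refine Sigma.subtype_ext (add_left_cancel (a := 0) (f.2.1 ?_)) hf
    rw [← f.2.2 0, hf]
    exact f'.2.2 0
  · rintro ⟨t, ht⟩
    obtain ⟨k, hk⟩ := act_mk_eq_self_iff.1 ht
    exact ⟨⟨k, t.1, t.2, hk⟩, rfl⟩

theorem natCard_fixedPoints_act_mul_eq_sum_divisors (g : Equiv.Perm (Fin m)) :
    Nat.card {x : Cyc ℓ m // act g x = x} * ℓ =
      ∑ d ∈ ℓ.divisors, d.totient * ((cyc g d).descFactorial (ℓ / d) * d ^ (ℓ / d)) := by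
  let F d := (cyc g d).descFactorial (ℓ / d) * d ^ (ℓ / d)
  calc Nat.card {x : Cyc ℓ m // act g x = x} * ℓ
      = ∑ k : Fin ℓ, F (addOrderOf k) := by
        rw [natCard_fixedPoints_act_mul]
        refine sum_congr rfl fun k _ => ?_
        rw [IntertwiningEmb.natCard, natCard_orbitOfCard_eq_cyc g (addOrderOf_pos k), Nat.card_fin]
    _ = ∑ d ∈ (Fintype.card (Fin ℓ)).divisors, d.totient • F d := IsAddCyclic.sum_comp_addOrderOf F
    _ = _ := by rw [Fintype.card_fin]; rfl

end Cycles

/-- The character of the permutation representation of `S_m` on the set `Γ_ℓ^m` of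
`ℓ`-cycles of `[1, m]` (i.e. the number of fixed points of `g` on `Γ_ℓ^m`) is given by a
polynomial in `X₁, …, X_ℓ` independent of `m`:
`χ(g) = φ(ℓ)X_ℓ(g) + ∑_{ed = ℓ, e ≠ 1} φ(d)(dᵉ/ℓ)·X_d(g)(X_d(g)−1)⋯(X_d(g)−e+1)`. -/
theorem char_perm_rep_cyc (ℓ m : ℕ) [NeZero ℓ] (g : Equiv.Perm (Fin m)) :
    (Nat.card {x : Cyc ℓ m // act g x = x} : ℚ) =
      Nat.totient ℓ * cyc g ℓ +
        ∑ d ∈ ℓ.divisors.erase ℓ,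
          (Nat.totient d : ℚ) * ((d : ℚ) ^ (ℓ / d) / ℓ) *
            Nat.descFactorial (cyc g d) (ℓ / d) := by
  have hℓ : (ℓ : ℚ) ≠ 0 := Nat.cast_ne_zero.2 (NeZero.ne ℓ)
  have h : (Nat.card {x : Cyc ℓ m // act g x = x} : ℚ) * ℓ =
      ∑ d ∈ ℓ.divisors,
        (d.totient : ℚ) * ((cyc g d).descFactorial (ℓ / d) * (d : ℚ) ^ (ℓ / d)) := by
    exact_mod_cast natCard_fixedPoints_act_mul_eq_sum_divisors g
  rw [← add_sum_erase _ _ (Nat.mem_divisors_self ℓ (NeZero.ne ℓ)),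
    Nat.div_self (Nat.pos_of_neZero ℓ), Nat.descFactorial_one, pow_one] at h
  rw [← mul_left_inj' hℓ, h, add_mul, sum_mul]
  congr 1
  · ring
  · exact sum_congr rfl fun d _ => by field_simp
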